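/- arXiv:1603.02916 — 2 statements merged into one kernel-verified Lean document; each statement's English description precedes it below -/
import Mathlib

section
/- For every x ∈ [-1,1] and every ε > 0, there exists a sequence s on the neuron set {1,2} with supp(s) = {1,2} such that |β_{12}(s) - x| < ε. In other words, the set of obtainable skew biases of sequences on two neurons is dense in [-1,1]. -/
/-!
The sequence `iᵃ j iᶜ` has `c_{ij} = a`, `c_{ji} = c` and spike counts `a + c` and `1`, so its
skew bias is `(a - c) / (a + c)`. Taking `a + c = N` and `a = ⌊N (x + 1) / 2⌋` approximates `x`
to within `2 / N`.
-/

open Finset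

namespace NeuralSeq

/-- The bias count `c_{ij}(s)`: number of index pairs `k < k'` with `s_k = i` and `s_{k'} = j`. -/
def biasCount {n : ℕ} : List (Fin n) → Fin n → Fin n → ℕ
  | [], _, _ => 0
  | a :: t, i, j => (if a = i then t.count j else 0) + biasCount t i j

/-- The skew bias `β_{ij}(s)`. -/
noncomputable def skewBias {n : ℕ} (s : List (Fin n)) (i j : Fin n) : ℝ :=
  if 0 < s.count i ∧ 0 < s.count j then
    ((biasCount s i j : ℝ) - (biasCount s j i : ℝ)) / ((s.count i : ℝ) * (s.count j : ℝ))
  else 0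

/-- The skew-bias matrix `B_skew(s)`. -/
noncomputable def Bskew {n : ℕ} (s : List (Fin n)) : Matrix (Fin n) (Fin n) ℝ :=
  Matrix.of fun i j => skewBias s i j

/-- The probability bias `b_{ij}(s)` (meaningful when `i, j ∈ supp(s)`). -/
noncomputable def probBias {n : ℕ} (s : List (Fin n)) (i j : Fin n) : ℝ :=
  (biasCount s i j : ℝ) / ((s.count i : ℝ) * (s.count j : ℝ))

/-- The (unnormalized) center of mass `com_i(s)`, with 1-based indexing. -/
noncomputable def com {n : ℕ} (s : List (Fin n)) (i : Fin n) : ℝ :=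
  if 0 < s.count i then
    (∑ k : Fin s.length, if s.get k = i then ((k : ℕ) + 1 : ℝ) else 0) / (s.count i : ℝ)
  else ((s.length : ℝ) + 1) / 2

/-- The normalized center of mass `γ_i(s)`. -/
noncomputable def gamma {n : ℕ} (s : List (Fin n)) (i : Fin n) : ℝ :=
  (2 * com s i - 1) / (s.length : ℝ) - 1

/-- The firing rate `ρ_i(s)`. -/
noncomputable def rate {n : ℕ} (s : List (Fin n)) (i : Fin n) : ℝ :=
  (s.count i : ℝ) / (s.length : ℝ)

/-- A sequence is pure if for every pair of distinct active neurons, all spikes of one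
precede all spikes of the other (equivalently, `c_{ij}(s) = 0` or `c_{ji}(s) = 0`). -/
def IsPure {n : ℕ} (s : List (Fin n)) : Prop :=
  ∀ i j : Fin n, i ≠ j → 0 < s.count i → 0 < s.count j →
    biasCount s i j = 0 ∨ biasCount s j i = 0

/-- The subsequence `s_I` of `s` given by an index set `I`. -/
def subseqOf {n : ℕ} (s : List (Fin n)) (I : Finset (Fin s.length)) : List (Fin n) :=
  ((List.finRange s.length).filter (fun k => decide (k ∈ I))).map s.get

/-- The shuffling `s^π` of `s` by a permutation `π` of its index set. -/
def shuffle {n : ℕ} (s : List (Fin n)) (π : Equiv.Perm (Fin s.length)) : List (Fin n) :=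
  (List.finRange s.length).map (fun k => s.get (π k))

/-- The order-`m` bias count `c_v(s)`: the number of subsequences of `s` equal to `v`. -/
def orderCount {n : ℕ} : List (Fin n) → List (Fin n) → ℕ
  | _, [] => 1
  | [], _ :: _ => 0
  | a :: t, v :: vs => (if a = v then orderCount t vs else 0) + orderCount t (v :: vs)

end NeuralSeq

namespace NeuralSeq

lemma biasCount_append {n : ℕ} (s t : List (Fin n)) (i j : Fin n) :
    biasCount (s ++ t) i j = biasCount s i j + s.count i * t.count j + biasCount t i j := by
  induction s with
  | nil => simp [biasCount]
  | cons a s ih =>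
    by_cases h : a = i
    · simp [biasCount, h, ih, List.count_append]
      ring
    · simp [biasCount, h, ih]

lemma biasCount_replicate_of_ne {n : ℕ} (m : ℕ) (v : Fin n) {i j : Fin n} (hij : i ≠ j) :
    biasCount (List.replicate m v) i j = 0 := by
  induction m with
  | zero => rfl
  | succ m ih =>
    by_cases hv : v = i
    · subst hv; simp [List.replicate_succ, biasCount, ih, List.count_replicate, hij]
    · simp [List.replicate_succ, biasCount, ih, hv]

lemma biasCount_replicate_append_cons {n : ℕ} {i j : Fin n} (hij : i ≠ j) (a c : ℕ) :
    biasCount (List.replicate a i ++ j :: List.replicate c i) i j = a ∧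
      biasCount (List.replicate a i ++ j :: List.replicate c i) j i = c := by
  simp [biasCount_append, biasCount, biasCount_replicate_of_ne _ _ hij,
    biasCount_replicate_of_ne _ _ hij.symm, List.count_replicate, hij, hij.symm]

lemma skewBias_replicate_append_cons {n : ℕ} {i j : Fin n} (hij : i ≠ j) {a c : ℕ}
    (hac : 0 < a + c) :
    skewBias (List.replicate a i ++ j :: List.replicate c i) i j = ((a : ℝ) - c) / (a + c) := by
  obtain ⟨hij', hji'⟩ := biasCount_replicate_append_cons hij a c
  have hi : (List.replicate a i ++ j :: List.replicate c i).count i = a + c := by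
    simp [hij.symm]
  have hj : (List.replicate a i ++ j :: List.replicate c i).count j = 1 := by
    simp [List.count_replicate, hij]
  rw [skewBias, if_pos (by omega), hij', hji', hi, hj]
  push_cast
  ring

lemma exists_nat_div_near {t : ℝ} (ht : t ∈ Set.Icc (0 : ℝ) 1) {ε : ℝ} (hε : 0 < ε) :
    ∃ a N : ℕ, 0 < N ∧ a ≤ N ∧ |(a : ℝ) / N - t| < ε := by
  obtain ⟨N, hN⟩ := exists_nat_gt (1 / ε)
  have hNpos : (0 : ℝ) < N := (one_div_pos.2 hε).trans hN
  have hNt : 0 ≤ N * t := mul_nonneg hNpos.le ht.1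
  refine ⟨⌊N * t⌋₊, N, by exact_mod_cast hNpos, ?_, ?_⟩
  · exact Nat.floor_le_of_le (mul_le_of_le_one_right hNpos.le ht.2)
  · have hlo := Nat.floor_le hNt
    have hhi := Nat.lt_floor_add_one (N * t)
    have hεN : 1 < ε * N := by rwa [div_lt_iff₀ hε, mul_comm] at hN
    rw [abs_lt, lt_sub_iff_add_lt, sub_lt_iff_lt_add, lt_div_iff₀ hNpos, div_lt_iff₀ hNpos]
    constructor <;> nlinarith

lemma exists_nat_sub_div_add_near {x : ℝ} (hx : x ∈ Set.Icc (-1 : ℝ) 1) {ε : ℝ} (hε : 0 < ε) :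
    ∃ a c : ℕ, 0 < a + c ∧ |((a : ℝ) - c) / (a + c) - x| < ε := by
  obtain ⟨a, N, hN, haN, hnear⟩ :=
    exists_nat_div_near (t := (x + 1) / 2) ⟨by linarith [hx.1], by linarith [hx.2]⟩
      (half_pos hε)
  refine ⟨a, N - a, by omega, ?_⟩
  have hN' : (N : ℝ) ≠ 0 := by positivity
  have hrescale : ((a : ℝ) - ↑(N - a)) / (a + ↑(N - a)) - x = 2 * ((a : ℝ) / N - (x + 1) / 2) := by
    rw [Nat.cast_sub haN, add_sub_cancel]
    field_simp
    ring
  rw [hrescale, abs_mul, abs_two]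
  linarith

end NeuralSeq

open NeuralSeq in
/-- skew biases of two-neuron sequences are dense in `[-1, 1]`. -/
theorem two_neuron_biases_dense (x : ℝ) (hx : x ∈ Set.Icc (-1 : ℝ) 1) (ε : ℝ) (hε : 0 < ε) :
    ∃ s : List (Fin 2), 0 < s.count 0 ∧ 0 < s.count 1 ∧
      |skewBias s 0 1 - x| < ε := by
  obtain ⟨a, c, hac, hnear⟩ := exists_nat_sub_div_add_near hx hε
  refine ⟨List.replicate a 0 ++ 1 :: List.replicate c 0, ?_, ?_, ?_⟩
  · simpa [List.count_replicate] using hac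
  · simp
  · rwa [skewBias_replicate_append_cons (by decide) hac]
end

section
/- If s is a pure sequence on the neuron set N = {1,...,n} with supp(s) = N, then there exists a permutation π of N such that for all neurons i, j: β_{ij}(s) = 1 if π(i) < π(j), β_{ij}(s) = -1 if π(i) > π(j), and β_{ii}(s) = 0. Equivalently, B_skew(s) = P^{-1} A P where A = B_skew((1,2,...,n)) and P is the permutation matrix of π. -/
/-! If `s` is pure and `i, j` both fire, then `i` fires entirely before `j` exactly when the first
spike of `i` precedes that of `j`; in that case `c_{ji}(s) = 0`, so `c_{ij}(s) = c_i c_j` and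
`β_{ij}(s) = 1`. Hence `β(s)` only depends on the order of first spikes, and the permutation `π`
ranking neurons by their first spike turns it into the skew-bias matrix of `(1, …, n)`, which is
pure because no neuron repeats. -/

open Finset

namespace NeuralSeq

variable {n : ℕ}

theorem biasCount_add_biasCount (s : List (Fin n)) {i j : Fin n} (hij : i ≠ j) :
    biasCount s i j + biasCount s j i = s.count i * s.count j := by
  induction s with
  | nil => rfl
  | cons a t ih =>
    simp only [biasCount, List.count_cons, beq_iff_eq]
    split_ifs <;> subst_vars <;> first | exact absurd rfl hij | linarith

theorem skewBias_self (s : List (Fin n)) (i : Fin n) : skewBias s i i = 0 := by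
  simp [skewBias]

theorem skewBias_swap (s : List (Fin n)) (i j : Fin n) : skewBias s j i = -skewBias s i j := by
  simp only [skewBias, and_comm (a := 0 < s.count j)]
  split_ifs <;> ring

theorem skewBias_eq_one_of_biasCount_eq_zero {s : List (Fin n)} {i j : Fin n} (hij : i ≠ j)
    (hji : biasCount s j i = 0) (hi : 0 < s.count i) (hj : 0 < s.count j) :
    skewBias s i j = 1 := by
  have hsum := biasCount_add_biasCount s hij
  rw [hji, add_zero] at hsum
  have hpos : (0 : ℝ) < s.count i * s.count j := by positivity
  rw [skewBias, if_pos ⟨hi, hj⟩, hji, hsum]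
  push_cast
  field_simp
  ring

theorem biasCount_pos_of_idxOf_lt {s : List (Fin n)} {i j : Fin n} (hj : j ∈ s)
    (h : s.idxOf i < s.idxOf j) : 0 < biasCount s i j := by
  induction s with
  | nil => simp at h
  | cons a t ih =>
    by_cases hai : a = i
    · subst hai
      have hja : j ≠ a := by rintro rfl; exact lt_irrefl _ h
      have hjt : j ∈ t := (List.mem_cons.mp hj).resolve_left hja
      rw [biasCount, if_pos rfl]
      exact Nat.add_pos_left (List.count_pos_iff.mpr hjt) _
    · have haj : a ≠ j := by rintro rfl; simp at h
      rw [List.idxOf_cons_ne t hai, List.idxOf_cons_ne t haj] at h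
      simp only [biasCount, if_neg hai, zero_add]
      exact ih ((List.mem_cons.mp hj).resolve_left (Ne.symm haj)) (Nat.succ_lt_succ_iff.mp h)

theorem isPure_of_nodup {s : List (Fin n)} (hs : s.Nodup) : IsPure s := by
  intro i j hij hi hj
  have hsum := biasCount_add_biasCount s hij
  rw [List.count_eq_one_of_mem hs (List.count_pos_iff.mp hi),
    List.count_eq_one_of_mem hs (List.count_pos_iff.mp hj)] at hsum
  omega

theorem IsPure.skewBias_eq_one_of_idxOf_lt {s : List (Fin n)} (hs : IsPure s) {i j : Fin n}
    (hi : i ∈ s) (hj : j ∈ s) (h : s.idxOf i < s.idxOf j) : skewBias s i j = 1 := by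
  have hij : i ≠ j := by rintro rfl; exact lt_irrefl _ h
  have hi' := List.count_pos_iff.mpr hi
  have hj' := List.count_pos_iff.mpr hj
  refine skewBias_eq_one_of_biasCount_eq_zero hij ?_ hi' hj'
  exact (hs i j hij hi' hj').resolve_left (biasCount_pos_of_idxOf_lt hj h).ne'

theorem skewBias_finRange_of_lt {a b : Fin n} (h : a < b) : skewBias (List.finRange n) a b = 1 :=
  (isPure_of_nodup (List.nodup_finRange n)).skewBias_eq_one_of_idxOf_lt
    (List.mem_finRange a) (List.mem_finRange b) (by simpa using h)

end NeuralSeq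

theorem Tuple.exists_perm_lt_iff_of_injective {n : ℕ} {α : Type*} [LinearOrder α]
    {f : Fin n → α} (hf : Function.Injective f) :
    ∃ π : Equiv.Perm (Fin n), ∀ i j, π i < π j ↔ f i < f j := by
  have hmono : StrictMono (f ∘ Tuple.sort f) :=
    (Tuple.monotone_sort f).strictMono_of_injective (hf.comp (Tuple.sort f).injective)
  refine ⟨(Tuple.sort f)⁻¹, fun i j => ?_⟩
  simpa using hmono.lt_iff_lt (a := (Tuple.sort f)⁻¹ i) (b := (Tuple.sort f)⁻¹ j) |>.symm

theorem Equiv.Perm.permMatrix_mul_mul_permMatrix_inv {m R : Type*} [Fintype m] [DecidableEq m]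
    [NonAssocSemiring R] (σ : Equiv.Perm m) (A : Matrix m m R) :
    σ.permMatrix R * A * σ⁻¹.permMatrix R = A.submatrix σ σ := by
  rw [Equiv.Perm.permMatrix, Equiv.Perm.permMatrix, PEquiv.toMatrix_toPEquiv_mul,
    PEquiv.mul_toMatrix_toPEquiv]
  rfl

open NeuralSeq Matrix in
/-- the skew-bias matrix of a pure full-support sequence is, up to conjugation
by a permutation matrix, the skew-bias matrix of the identity sequence `(1, 2, ..., n)`
(i.e. `β_ij = 1` if `π i < π j`, `β_ij = -1` if `π j < π i`, and `β_ii = 0`). -/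
theorem pure_Bskew_is_permuted_identity_bias {n : ℕ} (s : List (Fin n))
    (hsupp : ∀ i : Fin n, 0 < s.count i) (hpure : IsPure s) :
    ∃ π : Equiv.Perm (Fin n),
      (∀ i j : Fin n,
        (π i < π j → skewBias s i j = 1) ∧
        (π j < π i → skewBias s i j = -1) ∧
        (i = j → skewBias s i j = 0)) ∧
      Bskew s =
        (Equiv.Perm.permMatrix ℝ π) * Bskew (List.finRange n) * (Equiv.Perm.permMatrix ℝ π⁻¹) := by
  have hmem (i : Fin n) : i ∈ s := List.count_pos_iff.mp (hsupp i)
  obtain ⟨π, hπ⟩ := Tuple.exists_perm_lt_iff_of_injective (f := fun i => s.idxOf i)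
    fun i j h => (List.idxOf_inj (hmem i)).mp h
  have hlt {i j : Fin n} (h : π i < π j) : skewBias s i j = 1 :=
    hpure.skewBias_eq_one_of_idxOf_lt (hmem i) (hmem j) ((hπ i j).mp h)
  have hgt {i j : Fin n} (h : π j < π i) : skewBias s i j = -1 := by
    rw [skewBias_swap, hlt h]
  refine ⟨π, fun i j => ⟨hlt, hgt, fun h => h ▸ skewBias_self s i⟩, ?_⟩
  rw [Equiv.Perm.permMatrix_mul_mul_permMatrix_inv]
  ext i j
  change skewBias s i j = skewBias (List.finRange n) (π i) (π j)
  rcases lt_trichotomy (π i) (π j) with h | h | h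
  · rw [hlt h, skewBias_finRange_of_lt h]
  · rw [π.injective h, skewBias_self, skewBias_self]
  · rw [hgt h, skewBias_swap, skewBias_finRange_of_lt h]
end
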